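/- Let f : ℝᵖ → ℝ satisfy the bimodal Hessian condition with constants L, μ, κ_+, κ_-, ε and subspace S, and let θ_⋆ be its minimizer. Then for every θ ∈ ℝᵖ, the gradient step with the stable learning rate η = 1/L satisfies ‖Π_{Sᶜ}(θ − (1/L)·∇f(θ) − θ_⋆)‖ ≤ (1 − μ/(2L))·‖Π_{Sᶜ}(θ − θ_⋆)‖ + (ε/L)·‖Π_S(θ − θ_⋆)‖. -/

import Mathlib

open scoped RealInnerProductSpace

/-- The orthogonal projection onto a subspace `S` of `ℝᵖ`, as a map `ℝᵖ → ℝᵖ`. -/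
noncomputable def projE {p : ℕ} (S : Submodule ℝ (EuclideanSpace ℝ (Fin p)))
    (v : EuclideanSpace ℝ (Fin p)) : EuclideanSpace ℝ (Fin p) :=
  (S.orthogonalProjectionOnto v : EuclideanSpace ℝ (Fin p))

/-- The Hessian of `f : ℝᵖ → ℝ` at `x`, as the derivative of the gradient. -/
noncomputable def hessOp {p : ℕ} (f : EuclideanSpace ℝ (Fin p) → ℝ)
    (x : EuclideanSpace ℝ (Fin p)) :
    EuclideanSpace ℝ (Fin p) →L[ℝ] EuclideanSpace ℝ (Fin p) :=
  fderiv ℝ (gradient f) x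

/-- **Bimodal Hessian condition** (Definition 3): `f` is twice continuously
differentiable, `L`-smooth and `μ`-strongly convex, its Hessian restricted to the
subspace `S` has spectrum in `[L/κ₊, L]`, restricted to `Sᗮ` has spectrum in
`[μ, κ₋·μ]`, and the cross term `Π_S ∇²f(θ) Π_{Sᶜ}` has operator norm at most `ε`. -/
def BimodalHessian {p : ℕ} (f : EuclideanSpace ℝ (Fin p) → ℝ)
    (S : Submodule ℝ (EuclideanSpace ℝ (Fin p))) (L μ κp κm ε : ℝ) : Prop :=
  0 < μ ∧ μ < L ∧ 1 ≤ κp ∧ 1 ≤ κm ∧ 0 ≤ ε ∧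
  ContDiff ℝ 2 f ∧
  (∀ x v : EuclideanSpace ℝ (Fin p),
    μ * ‖v‖ ^ 2 ≤ ⟪v, hessOp f x v⟫ ∧ ⟪v, hessOp f x v⟫ ≤ L * ‖v‖ ^ 2) ∧
  (∀ x v : EuclideanSpace ℝ (Fin p),
    L / κp * ‖projE S v‖ ^ 2 ≤ ⟪projE S v, hessOp f x (projE S v)⟫ ∧
    ⟪projE S v, hessOp f x (projE S v)⟫ ≤ L * ‖projE S v‖ ^ 2) ∧
  (∀ x v : EuclideanSpace ℝ (Fin p),
    μ * ‖projE Sᗮ v‖ ^ 2 ≤ ⟪projE Sᗮ v, hessOp f x (projE Sᗮ v)⟫ ∧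
    ⟪projE Sᗮ v, hessOp f x (projE Sᗮ v)⟫ ≤ κm * μ * ‖projE Sᗮ v‖ ^ 2) ∧
  (∀ x v : EuclideanSpace ℝ (Fin p),
    ‖projE S (hessOp f x (projE Sᗮ v))‖ ≤ ε * ‖v‖)

/-!
Along the segment `θ⋆ + s • (θ - θ⋆)` the projected step `Π_{Sᗮ} (x - L⁻¹ ∇f x)` has derivative
`Π_{Sᗮ} (d - L⁻¹ H d)` with `d = θ - θ⋆` and `H` the Hessian at the current point, so by the mean
value inequality it suffices to bound this vector for every Hessian. Split `d = Π_S d + Π_{Sᗮ} d`.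
On `u = Π_{Sᗮ} d`, Cauchy–Schwarz for the form `⟪H ·, ·⟫` gives `‖H u‖² ≤ L ⟪H u, u⟫`, hence
`‖u - L⁻¹ H u‖² ≤ ‖u‖² - L⁻¹ ⟪H u, u⟫ ≤ (1 - μ/L) ‖u‖² ≤ (1 - μ/(2L))² ‖u‖²`. The block
`Π_{Sᗮ} H Π_S` is the adjoint of `Π_S H Π_{Sᗮ}`, so its norm is at most `ε`.
-/

namespace ContinuousLinearMap

variable {E : Type*} [NormedAddCommGroup E] [InnerProductSpace ℝ E]

theorem IsPositive.norm_apply_sq_le {T : E →L[ℝ] E} (hT : T.IsPositive) {L : ℝ} (hL : 0 ≤ L)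
    (hTL : ∀ v, ⟪T v, v⟫ ≤ L * ‖v‖ ^ 2) (u : E) : ‖T u‖ ^ 2 ≤ L * ⟪T u, u⟫ := by
  have hcs := LinearMap.BilinForm.apply_mul_apply_le_of_forall_zero_le
    ((innerₗ E).compl₁₂ (T : E →ₗ[ℝ] E) LinearMap.id) hT.inner_nonneg_left u (T u)
  simp only [LinearMap.compl₁₂_apply, innerₗ_apply_apply, LinearMap.id_apply, coe_coe] at hcs
  rw [hT.inner_left_eq_inner_right (T u) u, real_inner_self_eq_norm_sq] at hcs
  have hc : ⟪T u, u⟫ * ⟪T (T u), T u⟫ ≤ ⟪T u, u⟫ * (L * ‖T u‖ ^ 2) :=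
    mul_le_mul_of_nonneg_left (hTL (T u)) (hT.inner_nonneg_left u)
  rcases (sq_nonneg ‖T u‖).eq_or_lt with h0 | hpos
  · rw [← h0]
    exact mul_nonneg hL (hT.inner_nonneg_left u)
  · nlinarith

theorem IsPositive.norm_sub_inv_smul_apply_sq_le {T : E →L[ℝ] E} (hT : T.IsPositive) {L : ℝ}
    (hL : 0 < L) (hTL : ∀ v, ⟪T v, v⟫ ≤ L * ‖v‖ ^ 2) (u : E) :
    ‖u - L⁻¹ • T u‖ ^ 2 ≤ ‖u‖ ^ 2 - L⁻¹ * ⟪T u, u⟫ := by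
  have h := hT.norm_apply_sq_le hL.le hTL u
  rw [norm_sub_sq_real, norm_smul, inner_smul_right, real_inner_comm, mul_pow, Real.norm_eq_abs,
    abs_of_pos (inv_pos.2 hL)]
  have hL' : L⁻¹ ^ 2 * ‖T u‖ ^ 2 ≤ L⁻¹ * ⟪T u, u⟫ := by
    calc L⁻¹ ^ 2 * ‖T u‖ ^ 2 ≤ L⁻¹ ^ 2 * (L * ⟪T u, u⟫) := by gcongr
      _ = L⁻¹ * ⟪T u, u⟫ := by field_simp
  linarith

theorem norm_sub_inv_smul_apply_le_of_isSymmetric {T : E →L[ℝ] E} (hT : T.IsSymmetric) {μ L : ℝ}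
    (hμ : 0 ≤ μ) (hμL : μ ≤ L) (hL : 0 < L) (hlow : ∀ v, μ * ‖v‖ ^ 2 ≤ ⟪T v, v⟫)
    (hup : ∀ v, ⟪T v, v⟫ ≤ L * ‖v‖ ^ 2) (u : E) :
    ‖u - L⁻¹ • T u‖ ≤ (1 - μ / (2 * L)) * ‖u‖ := by
  have hpos : T.IsPositive :=
    (isPositive_iff T).2 ⟨hT, fun v => (mul_nonneg hμ (sq_nonneg _)).trans (hlow v)⟩
  have hsq : ‖u - L⁻¹ • T u‖ ^ 2 ≤ ((1 - μ / (2 * L)) * ‖u‖) ^ 2 := by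
    calc ‖u - L⁻¹ • T u‖ ^ 2 ≤ ‖u‖ ^ 2 - L⁻¹ * ⟪T u, u⟫ :=
          hpos.norm_sub_inv_smul_apply_sq_le hL hup u
      _ ≤ ‖u‖ ^ 2 - L⁻¹ * (μ * ‖u‖ ^ 2) := by gcongr; exact hlow u
      _ = ((1 - μ / (2 * L)) * ‖u‖) ^ 2 - (μ / (2 * L) * ‖u‖) ^ 2 := by field_simp; ring
      _ ≤ ((1 - μ / (2 * L)) * ‖u‖) ^ 2 := sub_le_self _ (sq_nonneg _)
  have hc : 0 ≤ 1 - μ / (2 * L) := by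
    rw [sub_nonneg, div_le_one (by positivity)]; linarith
  exact le_of_sq_le_sq hsq (by positivity)

end ContinuousLinearMap

open ContinuousLinearMap in
theorem IsSelfAdjoint.norm_starProjection_apply_starProjection_le {𝕜 E : Type*} [RCLike 𝕜]
    [NormedAddCommGroup E] [InnerProductSpace 𝕜 E] [CompleteSpace E] {T : E →L[𝕜] E}
    (hT : IsSelfAdjoint T) (K K' : Submodule 𝕜 E) [K.HasOrthogonalProjection]
    [K'.HasOrthogonalProjection] {ε : ℝ} (hε : 0 ≤ ε)
    (h : ∀ v, ‖K.starProjection (T (K'.starProjection v))‖ ≤ ε * ‖v‖) (v : E) :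
    ‖K'.starProjection (T (K.starProjection v))‖ ≤ ε * ‖K.starProjection v‖ := by
  have hadj : K'.starProjection ∘L T ∘L K.starProjection
      = adjoint (K.starProjection ∘L T ∘L K'.starProjection) := by
    simp only [adjoint_comp, (isSelfAdjoint_starProjection _).adjoint_eq, hT.adjoint_eq, comp_assoc]
  have hnorm : ‖K'.starProjection ∘L T ∘L K.starProjection‖ ≤ ε := by
    rw [hadj, LinearIsometryEquiv.norm_map]
    exact opNorm_le_bound _ hε h
  calc ‖K'.starProjection (T (K.starProjection v))‖
      = ‖(K'.starProjection ∘L T ∘L K.starProjection) (K.starProjection v)‖ := by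
        simp [Submodule.starProjection_eq_self_iff.mpr (K.starProjection_apply_mem v)]
    _ ≤ ε * ‖K.starProjection v‖ := le_of_opNorm_le _ hnorm _

theorem IsLocalMin.gradient_eq_zero {F : Type*} [NormedAddCommGroup F] [InnerProductSpace ℝ F]
    [CompleteSpace F] {f : F → ℝ} {a : F} (h : IsLocalMin f a) : gradient f a = 0 := by
  simp [gradient, h.fderiv_eq_zero]

section Hessian

variable {p : ℕ} {f : EuclideanSpace ℝ (Fin p) → ℝ}

open InnerProductSpace

theorem hessOp_eq_toDual_symm_comp_fderiv (x : EuclideanSpace ℝ (Fin p)) :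
    hessOp f x = ((toDual ℝ _).symm.toLinearIsometry.toContinuousLinearMap :
      StrongDual ℝ (EuclideanSpace ℝ (Fin p)) →L[ℝ] _) ∘L fderiv ℝ (fderiv ℝ f) x :=
  LinearIsometryEquiv.comp_fderiv _

theorem hasFDerivAt_gradient_hessOp (hf : ContDiff ℝ 2 f) (x : EuclideanSpace ℝ (Fin p)) :
    HasFDerivAt (gradient f) (hessOp f x) x := by
  have hgrad : ContDiff ℝ 1 (gradient f) :=
    (toDual ℝ _).symm.contDiff.comp (hf.fderiv_right (by norm_num))
  exact (hgrad.differentiable (by norm_num) x).hasFDerivAt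

theorem hessOp_isSymmetric (hf : ContDiff ℝ 2 f) (x : EuclideanSpace ℝ (Fin p)) :
    (hessOp f x).IsSymmetric := by
  have hsymm : IsSymmSndFDerivAt ℝ f x := hf.contDiffAt.isSymmSndFDerivAt (by simp)
  intro u v
  rw [ContinuousLinearMap.coe_coe, ← real_inner_comm u, hessOp_eq_toDual_symm_comp_fderiv,
    ContinuousLinearMap.comp_apply, ContinuousLinearMap.comp_apply]
  exact toDual_symm_apply.trans ((hsymm u v).trans toDual_symm_apply.symm)

end Hessian

theorem projE_eq_starProjection {p : ℕ} (K : Submodule ℝ (EuclideanSpace ℝ (Fin p))) :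
    projE K = K.starProjection :=
  rfl

section Bimodal

variable {p : ℕ} {f : EuclideanSpace ℝ (Fin p) → ℝ} {S : Submodule ℝ (EuclideanSpace ℝ (Fin p))}
  {L μ κp κm ε : ℝ}

theorem BimodalHessian.contDiff (hbim : BimodalHessian f S L μ κp κm ε) : ContDiff ℝ 2 f :=
  hbim.2.2.2.2.2.1

theorem BimodalHessian.norm_projE_orthogonal_sub_hessOp_le
    (hbim : BimodalHessian f S L μ κp κm ε) (x d : EuclideanSpace ℝ (Fin p)) :
    ‖projE Sᗮ (d - L⁻¹ • hessOp f x d)‖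
      ≤ (1 - μ / (2 * L)) * ‖projE Sᗮ d‖ + ε / L * ‖projE S d‖ := by
  obtain ⟨hμ, hμL, -, -, hε, hf, hglob, -, -, hcross⟩ := hbim
  have hL : 0 < L := hμ.trans hμL
  have hH := hessOp_isSymmetric hf x
  set H := hessOp f x
  simp only [projE_eq_starProjection] at hcross ⊢
  set P := Sᗮ.starProjection
  set Q := S.starProjection
  have hsplit : P (d - L⁻¹ • H d) = P (P d - L⁻¹ • H (P d)) - L⁻¹ • P (H (Q d)) := by
    conv_lhs => rw [← S.starProjection_add_starProjection_orthogonal d]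
    simp only [map_add, map_sub, map_smul, smul_add, P, Q,
      Submodule.starProjection_orthogonal_apply_eq_zero (S.starProjection_apply_mem d),
      Submodule.starProjection_eq_self_iff.mpr (Sᗮ.starProjection_apply_mem d)]
    abel
  have hdiag : ‖P d - L⁻¹ • H (P d)‖ ≤ (1 - μ / (2 * L)) * ‖P d‖ :=
    ContinuousLinearMap.norm_sub_inv_smul_apply_le_of_isSymmetric hH hμ.le hμL.le hL
      (fun v => real_inner_comm (H v) v ▸ (hglob x v).1)
      (fun v => real_inner_comm (H v) v ▸ (hglob x v).2) (P d)
  have hoff : ‖P (H (Q d))‖ ≤ ε * ‖Q d‖ :=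
    hH.isSelfAdjoint.norm_starProjection_apply_starProjection_le S Sᗮ hε (hcross x) d
  calc ‖P (d - L⁻¹ • H d)‖
      ≤ ‖P (P d - L⁻¹ • H (P d))‖ + ‖L⁻¹ • P (H (Q d))‖ := hsplit ▸ norm_sub_le _ _
    _ ≤ (1 - μ / (2 * L)) * ‖P d‖ + L⁻¹ * (ε * ‖Q d‖) := by
      rw [norm_smul, Real.norm_of_nonneg (inv_nonneg.2 hL.le)]
      gcongr
      exact (Sᗮ.norm_starProjection_apply_le _).trans hdiag
    _ = (1 - μ / (2 * L)) * ‖P d‖ + ε / L * ‖Q d‖ := by ring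

end Bimodal

/-- **Stable step: lower-subspace residual recursion** (proof of Theorem 2).
Under the bimodal Hessian condition, a gradient step with the stable learning rate
`1/L` satisfies
`‖Π_{Sᶜ}(θ − (1/L)∇f(θ) − θ⋆)‖ ≤ (1 − μ/(2L))‖Π_{Sᶜ}(θ − θ⋆)‖ + (ε/L)‖Π_S(θ − θ⋆)‖`. -/
theorem stable_step_lower_subspace
    {p : ℕ} (f : EuclideanSpace ℝ (Fin p) → ℝ)
    (S : Submodule ℝ (EuclideanSpace ℝ (Fin p)))
    (L μ κp κm ε : ℝ) (hbim : BimodalHessian f S L μ κp κm ε)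
    (θstar : EuclideanSpace ℝ (Fin p)) (hmin : ∀ x, f θstar ≤ f x)
    (θ : EuclideanSpace ℝ (Fin p)) :
    ‖projE Sᗮ (θ - (1 / L) • gradient f θ - θstar)‖
      ≤ (1 - μ / (2 * L)) * ‖projE Sᗮ (θ - θstar)‖ + (ε / L) * ‖projE S (θ - θstar)‖ := by
  have hgrad : gradient f θstar = 0 := IsLocalMin.gradient_eq_zero (.of_forall hmin)
  set d := θ - θstar
  let step : EuclideanSpace ℝ (Fin p) → EuclideanSpace ℝ (Fin p) := fun x =>
    x - L⁻¹ • gradient f x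
  have hderiv : ∀ s ∈ Set.Icc (0 : ℝ) 1,
      HasDerivWithinAt (fun s => projE Sᗮ (step (θstar + s • d)))
      (projE Sᗮ (d - L⁻¹ • hessOp f (θstar + s • d) d)) (Set.Icc 0 1) s := by
    intro s _
    have hline : HasDerivAt (fun s : ℝ => θstar + s • d) d s := by
      simpa using ((hasDerivAt_id s).smul_const d).const_add θstar
    have hstep := hline.sub (((hasFDerivAt_gradient_hessOp hbim.contDiff _).comp_hasDerivAt s
      hline).const_smul L⁻¹)
    exact (Sᗮ.starProjection.hasFDerivAt.comp_hasDerivAt s hstep).hasDerivWithinAt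
  have hmvt := norm_image_sub_le_of_norm_deriv_le_segment_01' hderiv
    (fun s _ => hbim.norm_projE_orthogonal_sub_hessOp_le _ d)
  have hends : projE Sᗮ (step (θstar + (1 : ℝ) • d)) - projE Sᗮ (step (θstar + (0 : ℝ) • d))
      = projE Sᗮ (θ - (1 / L) • gradient f θ - θstar) := by
    simp only [step, d, one_smul, zero_smul, add_zero, add_sub_cancel, hgrad, smul_zero, sub_zero,
      projE_eq_starProjection, ← map_sub, one_div]
  rwa [hends] at hmvt
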